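/- Let 0 < α < β < ∞, let μ : ℝ → ℝ be continuous and nonnegative, let φ : [0,∞) → ℝ be locally integrable, and let b : [0,∞)×[0,∞) → ℝ be continuous with b(a,t) = 0 for a ∉ [α,β]. Set π(a) = exp(−∫₀^a μ(s) ds), b̄(a,t) = b(a,t)·π(a), φ̄(a) = φ(a)/π(a). Then there exists a continuous function B : [0,∞) → ℝ satisfying the Lotka renewal integral equation B(t) = ∫₀^t b̄(a,t)·B(t−a) da + ∫_t^∞ b̄(a,t)·φ̄(a−t) da for all t ≥ 0, and every such solution satisfies B(t) = ∫_α^β b̄(c,t)·φ̄(c−t) dc for t ∈ [0,α]. -/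

import Mathlib

/-! Because the kernel vanishes for ages below `α > 0`, the renewal equation on `[0, t + α]` only
sees `B` on `[0, t]` (method of steps). Hence the Picard iterates of the renewal map stabilise:
the `(n + 1)`-st iterate is final on `(-∞, n α]`, and gluing them gives a continuous fixed point.
On `[0, α]` the convolution term of any solution vanishes, leaving the forcing term, whose
integrand is supported in `[α, β]`. -/

open MeasureTheory Real Set Function

theorem continuous_intervalIntegral_mul {X : Type*} [TopologicalSpace X]
    [WeaklyLocallyCompactSpace X] [FirstCountableTopology X] {K : X → ℝ → ℝ} {f : ℝ → ℝ} {a b : ℝ}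
    (hK : Continuous (uncurry K)) (hf : IntervalIntegrable f volume a b) :
    Continuous fun x => ∫ c in a..b, K x c * f c := by
  refine continuous_iff_continuousAt.2 fun x₀ => ?_
  obtain ⟨U, hUc, hU⟩ := exists_compact_mem_nhds x₀
  obtain ⟨M, hM⟩ := (hUc.prod isCompact_uIcc).exists_bound_of_continuousOn hK.continuousOn
  apply intervalIntegral.continuousAt_of_dominated_interval (bound := fun c => M * ‖f c‖)
  · exact .of_forall fun x =>
      (hK.comp (continuous_const.prodMk continuous_id)).aestronglyMeasurable.mul
        hf.def'.aestronglyMeasurable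
  · filter_upwards [hU] with x hx
    refine .of_forall fun c hc => ?_
    rw [norm_mul]
    exact mul_le_mul_of_nonneg_right (hM (x, c) ⟨hx, uIoc_subset_uIcc hc⟩) (norm_nonneg _)
  · exact hf.norm.const_mul M
  · exact .of_forall fun c _ =>
      ((hK.comp (continuous_id.prodMk continuous_const)).mul continuous_const).continuousAt

section ForcingTerm

variable {K : ℝ → ℝ → ℝ} {f : ℝ → ℝ} {β : ℝ}

theorem setIntegral_Ici_mul_comp_sub_eq_intervalIntegral (hβ : 0 ≤ β)
    (hK : ∀ a t, 0 ≤ t → β < a → K a t = 0) {t : ℝ} (ht : 0 ≤ t) :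
    ∫ a in Ici t, K a t * f (a - t) = ∫ c in (0:ℝ)..β, K (c + t) t * f c := by
  have hshift := (measurePreserving_add_right volume t).setIntegral_image_emb
    (measurableEmbedding_addRight t) (fun a => K a t * f (a - t)) (Ici 0)
  simp only [image_add_const_Ici, zero_add, add_sub_cancel_right] at hshift
  rw [hshift, intervalIntegral.integral_of_le hβ, ← integral_Icc_eq_integral_Ioc,
    setIntegral_eq_of_subset_of_forall_sdiff_eq_zero measurableSet_Ici Icc_subset_Ici_self]
  rintro c ⟨hc, hcβ⟩
  have hβc : β < c := not_le.1 fun h => hcβ ⟨hc, h⟩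
  rw [hK _ t ht (by linarith), zero_mul]

theorem continuousOn_setIntegral_Ici_mul_comp_sub (hK : Continuous (uncurry K)) (hβ : 0 ≤ β)
    (hKβ : ∀ a t, 0 ≤ t → β < a → K a t = 0) (hf : IntervalIntegrable f volume 0 β) :
    ContinuousOn (fun t => ∫ a in Ici t, K a t * f (a - t)) (Ici 0) :=
  (continuous_intervalIntegral_mul (K := fun t c => K (c + t) t)
    (hK.comp ((continuous_snd.add continuous_fst).prodMk continuous_fst)) hf).continuousOn.congr
    fun _ ht => setIntegral_Ici_mul_comp_sub_eq_intervalIntegral hβ hKβ ht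

end ForcingTerm

section MethodOfSteps

variable {K : ℝ → ℝ → ℝ} {g : ℝ → ℝ} {α : ℝ} {C D : ℝ → ℝ} {t : ℝ}

/-- Evaluating at `max t 0` makes the image constant on `(-∞, 0]`, where `K` and `g` are not
controlled, and hence continuous on all of `ℝ`. -/
noncomputable def renewalMap (K : ℝ → ℝ → ℝ) (g C : ℝ → ℝ) (t : ℝ) : ℝ :=
  (∫ a in (0:ℝ)..max t 0, K a (max t 0) * C (max t 0 - a)) + g (max t 0)

theorem renewalMap_of_nonneg (ht : 0 ≤ t) :
    renewalMap K g C t = (∫ a in (0:ℝ)..t, K a t * C (t - a)) + g t := by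
  simp only [renewalMap, max_eq_left ht]

theorem renewalMap_of_nonpos (ht : t ≤ 0) : renewalMap K g C t = g 0 := by
  simp only [renewalMap, max_eq_right ht, intervalIntegral.integral_same, zero_add]

theorem continuous_renewalMap (hK : Continuous (uncurry K)) (hg : ContinuousOn g (Ici 0))
    (hC : Continuous C) : Continuous (renewalMap K g C) := by
  have hmax : Continuous fun t : ℝ => max t 0 := continuous_id.max continuous_const
  have hconv : Continuous fun T => ∫ a in (0:ℝ)..T, K a T * C (T - a) :=
    intervalIntegral.continuous_parametric_intervalIntegral_of_continuous
      ((hK.comp (continuous_snd.prodMk continuous_fst)).mul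
        (hC.comp (continuous_fst.sub continuous_snd))) continuous_id
  exact (hconv.comp hmax).add (hg.comp_continuous hmax fun t => le_max_right t 0)

theorem renewalMap_eqOn (hK0 : ∀ a t, 0 ≤ t → a < α → K a t = 0) {T : ℝ}
    (h : EqOn C D (Iic T)) : EqOn (renewalMap K g C) (renewalMap K g D) (Iic (T + α)) := by
  intro t ht
  rcases le_total t 0 with ht0 | ht0
  · rw [renewalMap_of_nonpos ht0, renewalMap_of_nonpos ht0]
  rw [renewalMap_of_nonneg ht0, renewalMap_of_nonneg ht0]
  congr 1
  refine intervalIntegral.integral_congr fun a ha => ?_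
  rw [uIcc_of_le ht0] at ha
  rcases lt_or_ge a α with haα | haα
  · simp only [hK0 a t ht0 haα, zero_mul]
  · simp only [h (show t - a ≤ T by linarith [mem_Iic.1 ht])]

theorem renewalMap_iterate_eqOn (hK0 : ∀ a t, 0 ≤ t → a < α → K a t = 0) {n m : ℕ}
    (hnm : n ≤ m) :
    EqOn ((renewalMap K g)^[n + 1] 0) ((renewalMap K g)^[m + 1] 0) (Iic (n * α)) := by
  induction n generalizing m with
  | zero =>
    intro t ht
    have ht0 : t ≤ 0 := by simpa using ht
    rw [iterate_succ_apply', iterate_succ_apply', renewalMap_of_nonpos ht0,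
      renewalMap_of_nonpos ht0]
  | succ n ih =>
    obtain ⟨m, rfl⟩ := Nat.exists_eq_add_of_le' (Nat.one_le_of_lt hnm)
    intro t ht
    rw [iterate_succ_apply' _ (n + 1), iterate_succ_apply' _ (m + 1)]
    exact renewalMap_eqOn hK0 (ih (m := m) (by omega)) (by simpa [add_mul] using ht)

noncomputable def renewalSolution (K : ℝ → ℝ → ℝ) (g : ℝ → ℝ) (α t : ℝ) : ℝ :=
  (renewalMap K g)^[⌈t / α⌉₊ + 1] 0 t

theorem renewalSolution_eqOn_iterate (hα : 0 < α) (hK0 : ∀ a t, 0 ≤ t → a < α → K a t = 0)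
    (n : ℕ) : EqOn (renewalSolution K g α) ((renewalMap K g)^[n + 1] 0) (Iic (n * α)) :=
  fun _ ht => renewalMap_iterate_eqOn hK0 (Nat.ceil_le.2 ((div_le_iff₀ hα).2 ht))
    ((div_le_iff₀ hα).1 (Nat.le_ceil _))

theorem continuous_renewalSolution (hα : 0 < α) (hK : Continuous (uncurry K))
    (hK0 : ∀ a t, 0 ≤ t → a < α → K a t = 0) (hg : ContinuousOn g (Ici 0)) :
    Continuous (renewalSolution K g α) := by
  have hiter : ∀ n, Continuous ((renewalMap K g)^[n] 0) := fun n => by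
    induction n with
    | zero => exact continuous_const
    | succ n ih => rw [iterate_succ']; exact continuous_renewalMap hK hg ih
  refine continuous_iff_continuousAt.2 fun t => ?_
  obtain ⟨n, hn⟩ := exists_nat_gt (t / α)
  have hnear : renewalSolution K g α =ᶠ[nhds t] (renewalMap K g)^[n + 1] 0 :=
    Filter.eventually_of_mem (Iio_mem_nhds ((div_lt_iff₀ hα).1 hn)) fun s hs =>
      renewalSolution_eqOn_iterate hα hK0 n (mem_Iic.2 (le_of_lt hs))
  exact (hiter (n + 1)).continuousAt.congr hnear.symm

theorem renewalMap_renewalSolution (hα : 0 < α) (hK0 : ∀ a t, 0 ≤ t → a < α → K a t = 0)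
    (t : ℝ) : renewalMap K g (renewalSolution K g α) t = renewalSolution K g α t := by
  obtain ⟨n, hn⟩ := exists_nat_ge (t / α)
  have htn : t ≤ n * α := (div_le_iff₀ hα).1 hn
  calc renewalMap K g (renewalSolution K g α) t
      = renewalMap K g ((renewalMap K g)^[n + 1] 0) t :=
        renewalMap_eqOn hK0 (renewalSolution_eqOn_iterate hα hK0 n) (mem_Iic.2 (by linarith))
    _ = (renewalMap K g)^[n + 1 + 1] 0 t :=
        congrFun (iterate_succ_apply' (renewalMap K g) (n + 1) 0).symm t
    _ = renewalSolution K g α t :=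
        (renewalSolution_eqOn_iterate hα hK0 (n + 1) (mem_Iic.2 (by push_cast; linarith))).symm

theorem exists_continuous_renewal_solution (hα : 0 < α) (hK : Continuous (uncurry K))
    (hK0 : ∀ a t, 0 ≤ t → a < α → K a t = 0) (hg : ContinuousOn g (Ici 0)) :
    ∃ B : ℝ → ℝ, Continuous B ∧
      ∀ t, 0 ≤ t → B t = (∫ a in (0:ℝ)..t, K a t * B (t - a)) + g t :=
  ⟨renewalSolution K g α, continuous_renewalSolution hα hK hK0 hg, fun t ht =>
    (renewalMap_renewalSolution hα hK0 t).symm.trans (renewalMap_of_nonneg ht)⟩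

end MethodOfSteps

section InitialSegment

variable {K : ℝ → ℝ → ℝ} {f B : ℝ → ℝ} {α β t : ℝ}

theorem renewal_eq_intervalIntegral_of_mem_Icc (hαβ : α ≤ β)
    (hK : ∀ a t, 0 ≤ t → a ∉ Icc α β → K a t = 0)
    (hB : ∀ t, 0 ≤ t →
      B t = (∫ a in (0:ℝ)..t, K a t * B (t - a)) + ∫ a in Ici t, K a t * f (a - t))
    (ht : t ∈ Icc 0 α) : B t = ∫ c in α..β, K c t * f (c - t) := by
  have hconv : ∫ a in (0:ℝ)..t, K a t * B (t - a) = 0 :=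
    (intervalIntegral.integral_congr_Ioo_of_le ht.1 fun a ha => by
      simp only [hK a t ht.1 fun h => (ha.2.trans_le ht.2).not_ge h.1, zero_mul]).trans
      intervalIntegral.integral_zero
  rw [hB t ht.1, hconv, zero_add, intervalIntegral.integral_of_le hαβ,
    ← integral_Icc_eq_integral_Ioc, setIntegral_eq_of_subset_of_forall_sdiff_eq_zero
      measurableSet_Ici (Icc_subset_Ici_iff hαβ |>.2 ht.2)]
  exact fun a ha => by rw [hK a t ht.1 ha.2, zero_mul]

end InitialSegment

theorem lotka_renewal_equation_existence_and_initial_segment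
    (α β : ℝ) (hα : 0 < α) (hαβ : α < β)
    (μ : ℝ → ℝ) (hμc : Continuous μ)
    (φ : ℝ → ℝ) (hφ : MeasureTheory.LocallyIntegrableOn φ (Set.Ici 0) volume)
    (b : ℝ → ℝ → ℝ) (hbc : Continuous fun p : ℝ × ℝ => b p.1 p.2)
    (hbsupp : ∀ a t, 0 ≤ t → a ∉ Set.Icc α β → b a t = 0)
    (pi : ℝ → ℝ) (hpi : ∀ a, pi a = Real.exp (-(∫ s in (0:ℝ)..a, μ s)))
    (bbar : ℝ → ℝ → ℝ) (hbbar : ∀ a t, bbar a t = b a t * pi a)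
    (φbar : ℝ → ℝ) (hφbar : ∀ a, φbar a = φ a / pi a) :
    (∃ B : ℝ → ℝ, ContinuousOn B (Set.Ici 0) ∧
      ∀ t : ℝ, 0 ≤ t →
        B t = (∫ a in (0:ℝ)..t, bbar a t * B (t - a)) +
          ∫ a in Set.Ici t, bbar a t * φbar (a - t)) ∧
    (∀ B : ℝ → ℝ, ContinuousOn B (Set.Ici 0) →
      (∀ t : ℝ, 0 ≤ t →
        B t = (∫ a in (0:ℝ)..t, bbar a t * B (t - a)) +
          ∫ a in Set.Ici t, bbar a t * φbar (a - t)) →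
      ∀ t ∈ Set.Icc (0:ℝ) α, B t = ∫ c in α..β, bbar c t * φbar (c - t)) := by
  have hpi_cont : Continuous pi := by
    rw [funext hpi]
    exact (intervalIntegral.continuous_primitive (fun _ _ => hμc.intervalIntegrable _ _) 0).neg.rexp
  have hpi_ne : ∀ a, pi a ≠ 0 := fun a => hpi a ▸ (exp_pos _).ne'
  have hbbar_cont : Continuous (uncurry bbar) :=
    (hbc.mul (hpi_cont.comp continuous_fst)).congr fun p => (hbbar p.1 p.2).symm
  have hbbar_supp : ∀ a t, 0 ≤ t → a ∉ Icc α β → bbar a t = 0 := fun a t ht ha => by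
    rw [hbbar, hbsupp a t ht ha, zero_mul]
  have hφbar_int : IntervalIntegrable φbar volume 0 β := by
    simp only [funext hφbar, div_eq_mul_inv]
    exact (intervalIntegrable_iff_integrableOn_Icc_of_le (hα.le.trans hαβ.le)).2 <|
      (hφ.integrableOn_compact_subset Icc_subset_Ici_self isCompact_Icc).mul_continuousOn
        (hpi_cont.continuousOn.inv₀ fun a _ => hpi_ne a) isCompact_Icc
  refine ⟨?_, fun B _ hB t ht => renewal_eq_intervalIntegral_of_mem_Icc hαβ.le hbbar_supp hB ht⟩
  obtain ⟨B, hB_cont, hB⟩ := exists_continuous_renewal_solution hα hbbar_cont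
    (fun a t ht ha => hbbar_supp a t ht fun h => ha.not_ge h.1)
    (continuousOn_setIntegral_Ici_mul_comp_sub hbbar_cont (hα.le.trans hαβ.le)
      (fun a t ht ha => hbbar_supp a t ht fun h => ha.not_ge h.2) hφbar_int)
  exact ⟨B, hB_cont.continuousOn, hB⟩
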